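/- For n ≥ d ≥ 1 and ⌈d/2⌉ ≤ k ≤ d, the number of k-faces of the dual cyclic polytope satisfies f_k(c*(n,d)) = C(n, d-k). -/

import Mathlib

/-!
For `k ≥ ⌈d/2⌉` the first sum in McMullen's formula ranges over an empty interval. In the second,
`C(n-r-1, d-r) = C(n-1-r, n-1-d)` when `n > d`, so it is the upper-index Vandermonde sum
`∑ r, C(r, k) C(n-1-r, n-1-d) = C(n, n-d+k)`; when `n = d` only the term `r = d` survives.
-/

open Finset

namespace Nat

theorem sum_antidiagonal_choose_mul_choose (a s b : ℕ) :
    ∑ ij ∈ antidiagonal s, ij.1.choose a * ij.2.choose b = (s + 1).choose (a + b + 1) := by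
  induction s generalizing b with
  | zero => rcases a with _ | a <;> rcases b with _ | b <;> simp [choose_eq_zero_of_lt]
  | succ s ih =>
    rw [Nat.sum_antidiagonal_succ']
    rcases b with _ | b
    · have ih0 := ih 0
      simp only [choose_zero_right, mul_one, add_zero] at ih0 ⊢
      rw [ih0, ← choose_succ_succ']
    · simp only [choose_succ_succ' _ b, mul_add, sum_add_distrib, ih, choose_zero_succ,
        mul_zero, zero_add]
      rw [← add_assoc a b 1, ← choose_succ_succ']

theorem sum_range_choose_mul_choose_sub (a s b : ℕ) :
    ∑ r ∈ range (s + 1), r.choose a * (s - r).choose b = (s + 1).choose (a + b + 1) := by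
  rw [← sum_antidiagonal_choose_mul_choose,
    Nat.sum_antidiagonal_eq_sum_range_succ (fun i j ↦ i.choose a * j.choose b)]

variable {n d k : ℕ}

theorem sum_Icc_choose_sub_mul_choose_of_lt (hkd : k ≤ d) (hdn : d < n) :
    ∑ r ∈ Icc k d, (n - r - 1).choose (d - r) * r.choose k = n.choose (d - k) := by
  obtain ⟨s, rfl⟩ : ∃ s, n = s + 1 := ⟨n - 1, by omega⟩
  have hterm : ∀ r ∈ Icc k d,
      (s + 1 - r - 1).choose (d - r) * r.choose k = r.choose k * (s - r).choose (s - d) := by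
    intro r hr
    rw [mem_Icc] at hr
    rw [mul_comm, show s + 1 - r - 1 = s - r by omega,
      choose_symm_of_eq_add (n := s - r) (a := d - r) (b := s - d) (by omega)]
  have hvanish : ∀ r ∈ range (s + 1), r ∉ Icc k d → r.choose k * (s - r).choose (s - d) = 0 := by
    intro r hrs hr
    rw [mem_range] at hrs
    rw [mem_Icc, not_and_or, not_le, not_le] at hr
    rcases hr with hrk | hdr
    · rw [choose_eq_zero_of_lt hrk, zero_mul]
    · rw [choose_eq_zero_of_lt (by omega : s - r < s - d), mul_zero]
  calc ∑ r ∈ Icc k d, (s + 1 - r - 1).choose (d - r) * r.choose k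
      = ∑ r ∈ Icc k d, r.choose k * (s - r).choose (s - d) := sum_congr rfl hterm
    _ = ∑ r ∈ range (s + 1), r.choose k * (s - r).choose (s - d) :=
        sum_subset (fun r hr ↦ by simp only [mem_Icc, mem_range] at hr ⊢; omega) hvanish
    _ = (s + 1).choose (k + (s - d) + 1) := sum_range_choose_mul_choose_sub k s (s - d)
    _ = (s + 1).choose (d - k) := choose_symm_of_eq_add (by omega)

theorem sum_Icc_choose_pred_sub_mul_choose (hkd : k ≤ d) :
    ∑ r ∈ Icc k d, (d - r - 1).choose (d - r) * r.choose k = d.choose (d - k) := by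
  rw [sum_eq_single_of_mem d (right_mem_Icc.mpr hkd), Nat.sub_self, choose_self, one_mul,
    choose_symm hkd]
  intro r hr hrd
  rw [mem_Icc] at hr
  rw [choose_eq_zero_of_lt (by omega), zero_mul]

theorem sum_Icc_choose_sub_mul_choose (hkd : k ≤ d) (hdn : d ≤ n) :
    ∑ r ∈ Icc k d, (n - r - 1).choose (d - r) * r.choose k = n.choose (d - k) := by
  rcases hdn.lt_or_eq with hlt | rfl
  · exact sum_Icc_choose_sub_mul_choose_of_lt hkd hlt
  · exact sum_Icc_choose_pred_sub_mul_choose hkd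

end Nat

/-- For `n ≥ d ≥ 1` and `⌈d/2⌉ ≤ k ≤ d`, McMullen's formula for the number of
`k`-faces of the dual cyclic polytope `c*(n,d)` simplifies to `C(n, d-k)`. -/
theorem dualCyclic_faces_high_dim (n d k : ℕ) (hd : 1 ≤ d) (hdn : d ≤ n)
    (hk1 : (d + 1) / 2 ≤ k) (hk2 : k ≤ d) :
    (∑ r ∈ Finset.Icc (min k ((d + 1) / 2)) ((d + 1) / 2 - 1),
        (n - d - 1 + r).choose r * r.choose k) +
      (∑ r ∈ Finset.Icc (max k ((d + 1) / 2)) d,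
        (n - r - 1).choose (d - r) * r.choose k) = n.choose (d - k) := by
  have hlow : Finset.Icc (min k ((d + 1) / 2)) ((d + 1) / 2 - 1) = ∅ :=
    Finset.Icc_eq_empty (by omega)
  rw [hlow, Finset.sum_empty, zero_add, max_eq_left hk1]
  exact Nat.sum_Icc_choose_sub_mul_choose hk2 hdn
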